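/- arXiv:1712.03777 — 3 statements merged into one kernel-verified Lean document; each statement's English description precedes it below -/
import Mathlib

section
/- Let μ be a composition of m, let e ∈ X_{J(μ)} with e^{-1} w_{J(μ)} = w(t) for a sequence t of type μ, and let d be a prefix of e (i.e. d is obtained as an initial segment of some reduced expression of e, equivalently l(e) = l(d) + l(d^{-1}e)), with d^{-1} w_{J(μ)} = w(t') for t' of type μ. Then μ^♯_i(t) ≤ μ^♯_i(t') for every i, where μ^♯_i denotes the number of good i's. -/
/- Conventions: `S_m = Equiv.Perm (Fin m)`, 0-based values, positions and symbols.
The paper product `ab` is `b * a` in Mathlib; thus the paper element `e⁻¹ w_{J(μ)}` is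
`w0 * e⁻¹` here (`w0 = w_{J(μ)}`, the longest element of the Young subgroup), the paper
right coset `W_{J(μ)} x` is `{x * u}`, and "`d` is a prefix of `e`", i.e.
`ℓ(e) = ℓ(d) + ℓ(d⁻¹e)`, is `invLen e = invLen d + invLen (e * d⁻¹)`.
Coxeter length = number of inversions. -/

def invLen {m : ℕ} (w : Equiv.Perm (Fin m)) : ℕ :=
  (Finset.univ.filter (fun p : Fin m × Fin m => p.1 < p.2 ∧ w p.2 < w p.1)).card

def inYoung {m : ℕ} (μ : Composition m) (u : Equiv.Perm (Fin m)) : Prop :=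
  ∀ i : Fin m, μ.index (u i) = μ.index i

def isMinRep {m : ℕ} (μ : Composition m) (x : Equiv.Perm (Fin m)) : Prop :=
  ∀ u : Equiv.Perm (Fin m), inYoung μ u → invLen x ≤ invLen (x * u)

def ofTypeL {m : ℕ} (μ : Composition m) (t : List ℕ) : Prop :=
  t.length = m ∧ (∀ a ∈ t, a < μ.length) ∧
    ∀ k : Fin μ.length, t.count (k : ℕ) = μ.blocksFun k

def seqPermVal {m : ℕ} (μ : Composition m) (t : List ℕ) (p : ℕ) : ℕ :=
  μ.sizeUpTo (t.getD p 0 + 1) - 1 - (t.take p).count (t.getD p 0)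

/-- `w = w(t)` for the sequence `t` of type `μ`: the occurrences of symbol `k` in `t`,
read left to right, are replaced by the members of the `k`-th block of `μ` in
decreasing order. -/
def isSeqPerm {m : ℕ} (μ : Composition m) (t : List ℕ) (w : Equiv.Perm (Fin m)) : Prop :=
  ∀ p : Fin m, (w p : ℕ) = seqPermVal μ t (p : ℕ)

def goodStep (g : ℕ → ℕ) (a : ℕ) : ℕ → ℕ :=
  if a = 0 ∨ g a < g (a - 1) then Function.update g a (g a + 1) else g

/-- `goodCounts t s` = number of good `s`'s in `t`; this is `μ♯_s(t)`. -/
def goodCounts (t : List ℕ) : ℕ → ℕ :=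
  t.foldl goodStep (fun _ => 0)

/-!
Induction on `ℓ(e d⁻¹)`. If `d ≠ e`, a descent `s` of `e d⁻¹` gives a prefix `s d` of `e`
one step longer than `d`, and passing from `d` to `s d` swaps two adjacent letters `a, b` of `t'`.
These letters satisfy `a < b`: `a ≤ b` because `d⁻¹` ascends at the descent of `e d⁻¹` and
`w_{J(μ)}` preserves blocks, and `a = b` is impossible because `w(t')` and `w(t)` would then
order the corresponding two values in opposite ways. Finally, reading `b` before `a` never yields
more good letters than reading `a` before `b`, so the good counts can only drop from `t'` to `t`.
-/

section

open Equiv Finset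

variable {m : ℕ}

def inversions (w : Perm (Fin m)) : Finset (Fin m × Fin m) :=
  univ.filter fun p => p.1 < p.2 ∧ w p.2 < w p.1

@[simp]
lemma mem_inversions {w : Perm (Fin m)} {p : Fin m × Fin m} :
    p ∈ inversions w ↔ p.1 < p.2 ∧ w p.2 < w p.1 :=
  mem_filter_univ p

lemma invLen_eq_card_inversions (w : Perm (Fin m)) : invLen w = #(inversions w) := rfl

lemma invLen_inv (w : Perm (Fin m)) : invLen w⁻¹ = invLen w := by
  simp only [invLen_eq_card_inversions]
  refine card_nbij' (fun p => (w⁻¹ p.2, w⁻¹ p.1)) (fun p => (w p.2, w p.1)) ?_ ?_ ?_ ?_ <;>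
    intro p <;> simp +contextual

lemma invLen_mul_le (c d : Perm (Fin m)) : invLen (c * d) ≤ invLen c + invLen d := by
  simp only [invLen_eq_card_inversions]
  refine card_le_card_sdiff_add_card.trans (Nat.add_le_add_right ?_ _)
  refine card_le_card_of_injOn (fun p => (d p.1, d p.2)) (fun p hp => ?_) (fun p _ q _ h => ?_)
  · simp only [coe_sdiff, Set.mem_sdiff, SetLike.mem_coe, mem_inversions, Perm.mul_apply, not_and,
      not_lt] at hp ⊢
    exact ⟨(hp.2 hp.1.1).lt_of_ne (d.injective.ne hp.1.1.ne), hp.1.2⟩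
  · simp only [Prod.mk.injEq, EmbeddingLike.apply_eq_iff_eq] at h
    exact Prod.ext h.1 h.2

lemma swap_apply_lt_swap_apply {i j p q : Fin m} (hij : i ⋖ j) (hpq : p < q)
    (hne : (p, q) ≠ (i, j)) : swap i j p < swap i j q := by
  rw [Fin.covBy_iff, Nat.covBy_iff_add_one_eq] at hij
  simp only [ne_eq, Prod.mk.injEq, Fin.ext_iff] at hne
  rw [Fin.lt_def] at hpq ⊢
  rw [swap_apply_def, swap_apply_def]
  split_ifs <;> simp only [Fin.ext_iff] at * <;> omega

lemma invLen_mul_swap {i j : Fin m} (hij : i ⋖ j) {w : Perm (Fin m)} (h : w i < w j) :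
    invLen (w * swap i j) = invLen w + 1 := by
  have hmem : (i, j) ∈ inversions (w * swap i j) := by simpa using ⟨hij.lt, h⟩
  rw [invLen_eq_card_inversions, ← card_erase_add_one hmem, invLen_eq_card_inversions]
  congr 1
  refine card_nbij' (fun p => (swap i j p.1, swap i j p.2)) (fun p => (swap i j p.1, swap i j p.2))
    (fun p hp => ?_) (fun p hp => ?_) (fun p _ => by simp) (fun p _ => by simp)
  · simp only [coe_erase, Set.mem_sdiff, SetLike.mem_coe, mem_inversions, Perm.mul_apply,
      Set.mem_singleton_iff] at hp ⊢
    exact ⟨swap_apply_lt_swap_apply hij hp.1.1 hp.2, hp.1.2⟩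
  · simp only [SetLike.mem_coe, mem_inversions, coe_erase, Set.mem_sdiff, Perm.mul_apply,
      swap_apply_self, Set.mem_singleton_iff, Prod.mk.injEq, swap_apply_eq_iff, swap_apply_left,
      swap_apply_right] at hp ⊢
    have hne : p ≠ (i, j) := by
      rintro rfl
      exact h.not_gt hp.2
    refine ⟨⟨swap_apply_lt_swap_apply hij hp.1 hne, hp.2⟩, ?_⟩
    rintro ⟨h1, h2⟩
    exact hij.lt.not_gt (h1 ▸ h2 ▸ hp.1)

lemma exists_covBy_apply_lt_apply {w : Perm (Fin m)} (hw : w ≠ 1) :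
    ∃ i j, i ⋖ j ∧ w j < w i := by
  by_contra! h
  have hmono : StrictMono w := (strictMono_iff_forall_covBy w).2 fun i j hij =>
    (h i j hij).lt_of_ne (w.injective.ne hij.ne)
  exact hw (Equiv.ext (congrFun ((hmono.range_inj strictMono_id).1 (by simp))))

lemma exists_covBy_prefix_swap {e d : Perm (Fin m)}
    (hpre : invLen e = invLen d + invLen (e * d⁻¹)) (hde : d ≠ e) :
    ∃ i j : Fin m, i ⋖ j ∧ (e * d⁻¹) j < (e * d⁻¹) i ∧ d⁻¹ i < d⁻¹ j ∧
      invLen e = invLen (swap i j * d) + invLen (e * (swap i j * d)⁻¹) ∧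
      invLen (e * (swap i j * d)⁻¹) < invLen (e * d⁻¹) := by
  set c := e * d⁻¹ with hc
  obtain ⟨i, j, hij, hdesc⟩ := exists_covBy_apply_lt_apply (w := c) (by
    rwa [hc, ne_eq, mul_inv_eq_one, eq_comm])
  have hc₁ : e * (swap i j * d)⁻¹ = c * swap i j := by
    rw [mul_inv_rev, swap_inv, hc, mul_assoc]
  have hlen_c : invLen (c * swap i j) + 1 = invLen c := by
    simpa [mul_assoc] using (invLen_mul_swap hij (w := c * swap i j) (by simpa using hdesc)).symm
  have hle : invLen e ≤ invLen (c * swap i j) + invLen (swap i j * d) := by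
    simpa [hc, mul_assoc] using invLen_mul_le (c * swap i j) (swap i j * d)
  have hlen_d : ∀ {x : Perm (Fin m)}, invLen (swap i j * x) = invLen (x⁻¹ * swap i j) := by
    intro x
    rw [← invLen_inv, mul_inv_rev, swap_inv]
  have hasc : d⁻¹ i < d⁻¹ j := by
    refine (lt_or_gt_of_ne (d⁻¹.injective.ne hij.ne)).resolve_right fun h => ?_
    have := invLen_mul_swap hij (w := d⁻¹ * swap i j) (by simpa using h)
    rw [mul_assoc, swap_mul_self, mul_one, invLen_inv, ← hlen_d] at this
    omega
  have hlen_d₁ : invLen (swap i j * d) = invLen d + 1 := by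
    rw [hlen_d, invLen_mul_swap hij hasc, invLen_inv]
  refine ⟨i, j, hij, hdesc, hasc, ?_, ?_⟩ <;> rw [hc₁] <;> omega

lemma List.count_take_lt_count_take_getD {α : Type*} [BEq α] [LawfulBEq α] {t : List α}
    {p q : ℕ} (hpq : p < q) (hp : p < t.length) (x : α) :
    (t.take p).count (t.getD p x) < (t.take q).count (t.getD p x) := by
  have hsucc : (t.take (p + 1)).count (t.getD p x) = (t.take p).count (t.getD p x) + 1 := by
    rw [List.take_add_one, List.getElem?_eq_getElem hp, List.getD_eq_getElem _ _ hp,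
      Option.toList_some, List.count_append, List.count_singleton_self]
  have hle : (t.take (p + 1)).count (t.getD p x) ≤ (t.take q).count (t.getD p x) :=
    ((List.take_prefix_take_left hpq).sublist).count_le _
  omega

lemma List.exists_eq_append_cons_cons {α : Type*} {t : List α} {i : ℕ} (h : i + 1 < t.length) :
    ∃ A a b B, t = A ++ a :: b :: B ∧ A.length = i :=
  ⟨t.take i, t[i], t[i + 1], t.drop (i + 2), by
    rw [← List.drop_eq_getElem_cons, ← List.drop_eq_getElem_cons, List.take_append_drop],
    by simp; omega⟩

lemma Composition.monotone_index {n : ℕ} (c : Composition n) : Monotone c.index := by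
  intro x y hxy
  by_contra! h
  have h₁ := c.monotone_sizeUpTo (Nat.add_one_le_of_lt h)
  have h₂ := c.sizeUpTo_index_le x
  have h₃ := c.lt_sizeUpTo_index_succ y
  rw [Fin.le_def] at hxy
  rw [Fin.val_succ] at h₃
  omega

section

variable {μ : Composition m} {t t' : List ℕ} {v : Perm (Fin m)}

lemma ofTypeL.getD_lt (ht : ofTypeL μ t) {p : ℕ} (hp : p < m) : t.getD p 0 < μ.length := by
  rw [List.getD_eq_getElem _ _ (ht.1 ▸ hp)]
  exact ht.2.1 _ (List.getElem_mem _)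

lemma ofTypeL.count_take_lt (ht : ofTypeL μ t) {p : ℕ} (hp : p < m) :
    (t.take p).count (t.getD p 0) < μ.blocksFun ⟨_, ht.getD_lt hp⟩ := by
  have hlt := List.count_take_lt_count_take_getD (q := t.length) (ht.1 ▸ hp) (ht.1 ▸ hp) 0
  rw [List.take_length] at hlt
  rw [← ht.2.2]
  exact hlt

lemma ofTypeL.perm (ht : ofTypeL μ t) (h : t.Perm t') : ofTypeL μ t' :=
  ⟨h.length_eq ▸ ht.1, fun a ha => ht.2.1 a (h.mem_iff.2 ha), fun k => h.count_eq _ ▸ ht.2.2 k⟩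

lemma isSeqPerm.index_apply (ht : ofTypeL μ t) (hv : isSeqPerm μ t v) (p : Fin m) :
    (μ.index (v p) : ℕ) = t.getD p 0 := by
  have hlt := ht.count_take_lt p.2
  have hv_emb : v p = μ.embedding ⟨_, ht.getD_lt p.2⟩
      ⟨μ.blocksFun ⟨_, ht.getD_lt p.2⟩ - 1 - (t.take p).count (t.getD p 0), by omega⟩ := by
    ext
    have hsucc := μ.sizeUpTo_succ' ⟨t.getD p 0, ht.getD_lt p.2⟩
    simp only [hv p, seqPermVal, Composition.coe_embedding] at hsucc ⊢
    omega
  rw [hv_emb, Composition.index_embedding]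

lemma isSeqPerm.apply_lt_apply (ht : ofTypeL μ t) (hv : isSeqPerm μ t v) {p q : Fin m}
    (hpq : p < q) (hindex : μ.index (v p) = μ.index (v q)) : v q < v p := by
  have hletter : t.getD q 0 = t.getD p 0 := by
    rw [← hv.index_apply ht, ← hv.index_apply ht, hindex]
  have hcount := List.count_take_lt_count_take_getD (t := t) (p := p) (q := q) hpq (ht.1 ▸ p.2) 0
  have hq := ht.count_take_lt q.2
  have hsucc : μ.sizeUpTo (t.getD p 0 + 1) = μ.sizeUpTo (t.getD p 0) + μ.blocksFun _ :=
    μ.sizeUpTo_succ' ⟨t.getD p 0, ht.getD_lt p.2⟩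
  simp only [hletter] at hq
  rw [Fin.lt_def, hv p, hv q, seqPermVal, seqPermVal, hletter]
  omega

lemma isSeqPerm.eq (ht : ofTypeL μ t) (ht' : ofTypeL μ t') (hv : isSeqPerm μ t v)
    (hv' : isSeqPerm μ t' v) : t = t' := by
  refine List.ext_getElem (ht.1.trans ht'.1.symm) fun p hp hp' => ?_
  have := (hv.index_apply ht ⟨p, ht.1 ▸ hp⟩).symm.trans (hv'.index_apply ht' ⟨p, ht.1 ▸ hp⟩)
  rwa [List.getD_eq_getElem _ _ hp, List.getD_eq_getElem _ _ hp'] at this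

lemma seqPermVal_append_cons_cons_swap (A B : List ℕ) {a b : ℕ} (hab : a ≠ b)
    (p : ℕ) : seqPermVal μ (A ++ b :: a :: B) p =
      seqPermVal μ (A ++ a :: b :: B) (swap A.length (A.length + 1) p) := by
  rcases lt_trichotomy p A.length with hp | rfl | hp
  · rw [swap_apply_of_ne_of_ne (by omega) (by omega)]
    simp [seqPermVal, List.getElem?_append_left hp, List.take_append_of_le_length hp.le]
  · simp [seqPermVal, hab, List.take_append, List.take_of_length_le]
  obtain rfl | hp' := eq_or_ne p (A.length + 1)
  · simp [seqPermVal, Ne.symm hab, List.take_append, List.take_of_length_le]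
  obtain ⟨k, rfl⟩ : ∃ k, p = A.length + (k + 2) := ⟨p - (A.length + 2), by omega⟩
  rw [swap_apply_of_ne_of_ne (by omega) (by omega)]
  simp only [seqPermVal, List.getD_eq_getElem?_getD, le_add_iff_nonneg_right, zero_le,
    List.getElem?_append_right, add_tsub_cancel_left, List.getElem?_cons_succ, List.take_append,
    List.take_of_length_le, List.take_succ_cons, List.count_append, List.count_cons, beq_iff_eq]
  omega

lemma isSeqPerm.append_cons_cons_swap {A B : List ℕ} {a b : ℕ}
    (hv : isSeqPerm μ (A ++ a :: b :: B) v) (hab : a ≠ b) {i j : Fin m} (hij : i ⋖ j)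
    (hi : (i : ℕ) = A.length) : isSeqPerm μ (A ++ b :: a :: B) (v * swap i j) := by
  intro p
  have hj : (j : ℕ) = i + 1 := (Nat.covBy_iff_add_one_eq.1 (Fin.covBy_iff.1 hij)).symm
  rw [Perm.mul_apply, hv, seqPermVal_append_cons_cons_swap A B hab, ← hi, ← hj,
    Fin.val_injective.swap_apply]

lemma getD_lt_getD_of_descent {w0 e d : Perm (Fin m)} (hw0 : inYoung μ w0)
    (ht : ofTypeL μ t) (ht' : ofTypeL μ t')
    (hu : isSeqPerm μ t (w0 * e⁻¹)) (hv : isSeqPerm μ t' (w0 * d⁻¹)) {i j : Fin m} (hij : i < j)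
    (hdesc : (e * d⁻¹) j < (e * d⁻¹) i) (hasc : d⁻¹ i < d⁻¹ j) :
    t'.getD i 0 < t'.getD j 0 := by
  have hletter (p : Fin m) : t'.getD p 0 = μ.index (d⁻¹ p) := by
    rw [← hv.index_apply ht', Perm.mul_apply, hw0]
  have hle : t'.getD i 0 ≤ t'.getD j 0 := by
    rw [hletter, hletter]
    exact μ.monotone_index hasc.le
  refine hle.lt_of_ne fun heq => ?_
  have hidx : μ.index ((w0 * d⁻¹) i) = μ.index ((w0 * d⁻¹) j) :=
    Fin.ext (by rw [hv.index_apply ht', hv.index_apply ht', heq])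
  have hv_lt := hv.apply_lt_apply ht' hij hidx
  have hvu (p : Fin m) : (w0 * d⁻¹) p = (w0 * e⁻¹) ((e * d⁻¹) p) := by simp
  rw [hvu, hvu] at hidx hv_lt
  exact hv_lt.not_gt (hu.apply_lt_apply ht hdesc hidx.symm)

end

lemma goodStep_apply (g : ℕ → ℕ) (a x : ℕ) :
    goodStep g a x = if (a = 0 ∨ g a < g (a - 1)) ∧ x = a then g x + 1 else g x := by
  unfold goodStep
  split_ifs <;> simp_all

lemma goodStep_mono {g₁ g₂ : ℕ → ℕ} (h : g₁ ≤ g₂) (a : ℕ) : goodStep g₁ a ≤ goodStep g₂ a := by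
  intro x
  have hx : g₁ x ≤ g₂ x := h x
  have ha' : g₁ (a - 1) ≤ g₂ (a - 1) := h (a - 1)
  simp only [goodStep_apply]
  split_ifs <;> grind

lemma monotone_foldl_goodStep (B : List ℕ) : Monotone fun g => B.foldl goodStep g := by
  induction B with
  | nil => exact monotone_id
  | cons b B ih => exact fun g₁ g₂ h => ih (goodStep_mono h b)

-- Whether `a` is good does not depend on the `b`s, and reading `a` first can only add a good
-- `b - 1` before the `b`.
lemma goodStep_goodStep_le {a b : ℕ} (hab : a < b) (g : ℕ → ℕ) :
    goodStep (goodStep g b) a ≤ goodStep (goodStep g a) b := by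
  intro x
  simp only [goodStep_apply]
  split_ifs <;> omega

lemma goodCounts_append_cons_cons_le (A B : List ℕ) {a b : ℕ} (hab : a < b) :
    goodCounts (A ++ b :: a :: B) ≤ goodCounts (A ++ a :: b :: B) := by
  simp only [goodCounts, List.foldl_append, List.foldl_cons]
  exact monotone_foldl_goodStep B (goodStep_goodStep_le hab _)

end

theorem stmt7_general (m : ℕ) (μ : Composition m) (w0 e d : Equiv.Perm (Fin m))
    (hw0 : inYoung μ w0)
    (hpre : invLen e = invLen d + invLen (e * d⁻¹))
    (t t' : List ℕ)
    (ht : ofTypeL μ t) (htw : isSeqPerm μ t (w0 * e⁻¹))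
    (ht' : ofTypeL μ t') (ht'w : isSeqPerm μ t' (w0 * d⁻¹)) :
    ∀ i : ℕ, goodCounts t i ≤ goodCounts t' i := by
  suffices goodCounts t ≤ goodCounts t' from this
  induction hn : invLen (e * d⁻¹) using Nat.strong_induction_on generalizing d t' with
  | _ n ih =>
  obtain rfl | hde := eq_or_ne d e
  · rw [htw.eq ht ht' ht'w]
  obtain ⟨i, j, hij, hdesc, hasc, hpre₁, hlt⟩ := exists_covBy_prefix_swap hpre hde
  have hj : (j : ℕ) = i + 1 := (Nat.covBy_iff_add_one_eq.1 (Fin.covBy_iff.1 hij)).symm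
  obtain ⟨A, a, b, B, rfl, hA⟩ :=
    List.exists_eq_append_cons_cons (t := t') (i := i) (by rw [ht'.1]; omega)
  have hab : a < b := by
    simpa [hj, ← hA] using getD_lt_getD_of_descent hw0 ht ht' htw ht'w hij.lt hdesc hasc
  have ht₁ : ofTypeL μ (A ++ b :: a :: B) :=
    ht'.perm (List.Perm.append_left A (List.Perm.swap b a B))
  have hw₁ : isSeqPerm μ (A ++ b :: a :: B) (w0 * (Equiv.swap i j * d)⁻¹) := by
    simpa [mul_assoc] using ht'w.append_cons_cons_swap hab.ne hij hA.symm
  exact (ih _ (hn ▸ hlt) _ hpre₁ _ ht₁ hw₁ rfl).trans (goodCounts_append_cons_cons_le A B hab)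

/-- if `e ∈ X_{J(μ)}` with `e⁻¹w_{J(μ)} = w(t)`, and `d` is a prefix of `e`
with `d⁻¹w_{J(μ)} = w(t')`, then `μ♯_i(t) ≤ μ♯_i(t')` for every `i`. -/
theorem stmt7 (m : ℕ) (μ : Composition m) (w0 e d : Equiv.Perm (Fin m))
    (hw0 : inYoung μ w0) (hw0max : ∀ u, inYoung μ u → invLen u ≤ invLen w0)
    (he : isMinRep μ e)
    (hpre : invLen e = invLen d + invLen (e * d⁻¹))
    (t t' : List ℕ)
    (ht : ofTypeL μ t) (htw : isSeqPerm μ t (w0 * e⁻¹))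
    (ht' : ofTypeL μ t') (ht'w : isSeqPerm μ t' (w0 * d⁻¹)) :
    ∀ i : ℕ, goodCounts t i ≤ goodCounts t' i :=
  stmt7_general m μ w0 e d hw0 hpre t t' ht htw ht' ht'w
end

section
/- Suppose e = ds in S_m with ℓ(e) = ℓ(d) + 1 for a simple transposition s = (k, k+1), and suppose both d and e lie in X_{J(μ)} for a composition μ of m. Let t, t' be the sequences of type μ with w(t) = e^{-1}w_{J(μ)} and w(t') = d^{-1}w_{J(μ)}. Then t is obtained from t' by swapping the entries in positions k and k+1, and the entry of t' in position k is strictly smaller than the entry in position k+1. -/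
namespace Composition

variable {n : ℕ} (c : Composition n)

theorem index_eq_of_sizeUpTo_le_of_lt {j : Fin n} {i : Fin c.length}
    (h₁ : c.sizeUpTo i ≤ j) (h₂ : (j : ℕ) < c.sizeUpTo ((i : ℕ) + 1)) : c.index j = i := by
  have hle := c.sizeUpTo_index_le j
  have hlt : (j : ℕ) < c.sizeUpTo ((c.index j : ℕ) + 1) := c.lt_sizeUpTo_index_succ j
  rcases lt_trichotomy (c.index j) i with hji | hji | hij
  · have := c.monotone_sizeUpTo (show (c.index j : ℕ) + 1 ≤ i from hji)
    omega
  · exact hji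
  · have := c.monotone_sizeUpTo (show (i : ℕ) + 1 ≤ c.index j from hij)
    omega

theorem monotone_index_s9 : Monotone c.index := by
  intro a b hab
  by_contra! hba
  have := c.monotone_sizeUpTo (show (c.index b : ℕ) + 1 ≤ c.index a from hba)
  have := c.sizeUpTo_index_le a
  have : (b : ℕ) < c.sizeUpTo ((c.index b : ℕ) + 1) := c.lt_sizeUpTo_index_succ b
  have : (a : ℕ) ≤ b := hab
  omega

end Composition

section Inversions

variable {m : ℕ}

theorem invLen_swap_mul_of_lt {a b : Fin m} (hab : (b : ℕ) = a + 1) (x : Equiv.Perm (Fin m))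
    (h : x⁻¹ a < x⁻¹ b) : invLen (Equiv.swap a b * x) = invLen x + 1 := by
  have hnew : ∀ i j : Fin m, x i = a → x j = b → i < j := by
    rintro i j rfl rfl
    simpa using h
  have hold : ∀ i j : Fin m, x i = b → x j = a → j < i := by
    rintro i j rfl rfl
    simpa using h
  have hinversions :
      Finset.univ.filter (fun p : Fin m × Fin m =>
          p.1 < p.2 ∧ (Equiv.swap a b * x) p.2 < (Equiv.swap a b * x) p.1) =
        insert (x⁻¹ a, x⁻¹ b)
          (Finset.univ.filter (fun p : Fin m × Fin m => p.1 < p.2 ∧ x p.2 < x p.1)) := by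
    ext ⟨i, j⟩
    have := hnew i j
    have := hold i j
    rw [Finset.mem_insert, Finset.mem_filter, Finset.mem_filter, Prod.mk.injEq,
      Equiv.Perm.eq_inv_iff_eq, Equiv.Perm.eq_inv_iff_eq, Equiv.Perm.mul_apply,
      Equiv.Perm.mul_apply, Equiv.swap_apply_def, Equiv.swap_apply_def]
    simp only [Finset.mem_univ, true_and, Fin.lt_def, Fin.ext_iff] at *
    split_ifs <;> omega
  have hfresh : (x⁻¹ a, x⁻¹ b) ∉
      Finset.univ.filter (fun p : Fin m × Fin m => p.1 < p.2 ∧ x p.2 < x p.1) := by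
    simp [← Fin.val_fin_lt, hab]
  unfold invLen
  rw [hinversions, Finset.card_insert_of_notMem hfresh]

end Inversions

section YoungSubgroup

variable {m : ℕ} (μ : Composition m)

theorem inYoung_swap {a b : Fin m} (h : μ.index a = μ.index b) : inYoung μ (Equiv.swap a b) := by
  intro i
  rcases eq_or_ne i a with rfl | hia
  · rw [Equiv.swap_apply_left, h]
  rcases eq_or_ne i b with rfl | hib
  · rw [Equiv.swap_apply_right, h]
  · rw [Equiv.swap_apply_of_ne_of_ne hia hib]

theorem index_inv_lt_of_swap_mul {d e : Equiv.Perm (Fin m)} {a b : Fin m}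
    (hab : (b : ℕ) = a + 1) (he : isMinRep μ e) (hds : e = Equiv.swap a b * d)
    (hlen : invLen e = invLen d + 1) : μ.index (d⁻¹ a) < μ.index (d⁻¹ b) := by
  have hlt : d⁻¹ a < d⁻¹ b := by
    by_contra! hge
    have hne : d⁻¹ b ≠ d⁻¹ a := by simp [Fin.ext_iff, hab]
    have he_inv : e⁻¹ a < e⁻¹ b := by
      simpa [hds] using lt_of_le_of_ne hge hne
    have := invLen_swap_mul_of_lt hab e he_inv
    rw [hds, Equiv.swap_mul_self_mul, ← hds] at this
    omega
  have hne : μ.index (d⁻¹ a) ≠ μ.index (d⁻¹ b) := by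
    intro hblock
    have hcoset : e * Equiv.swap (d⁻¹ a) (d⁻¹ b) = d := by
      rw [hds, Equiv.swap_mul_eq_mul_swap, Equiv.mul_swap_mul_self]
    have := he _ (inYoung_swap μ hblock)
    rw [hcoset] at this
    omega
  exact lt_of_le_of_ne (μ.monotone_index_s9 hlt.le) hne

end YoungSubgroup

section Sequences

variable {m : ℕ} {μ : Composition m} {t : List ℕ}

theorem getD_eq_index_of_isSeqPerm {w : Equiv.Perm (Fin m)} (ht : ofTypeL μ t)
    (hw : isSeqPerm μ t w) {p : ℕ} (hp : p < m) : t.getD p 0 = μ.index (w ⟨p, hp⟩) := by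
  obtain ⟨hlen, hbound, hcount⟩ := ht
  have hpt : p < t.length := hlen ▸ hp
  set i := t.getD p 0 with hi
  have hmem : i ∈ t := by
    rw [hi, List.getD_eq_getElem t 0 hpt]
    exact List.getElem_mem hpt
  have hiμ : i < μ.length := hbound i hmem
  have hsplit : t.count i = (t.take p).count i + (t.drop p).count i := by
    rw [← List.count_append, List.take_append_drop]
  have hlater : 1 ≤ (t.drop p).count i := by
    rw [List.one_le_count_iff, hi, List.getD_eq_getElem t 0 hpt, List.drop_eq_getElem_cons hpt]
    exact List.mem_cons_self
  have hblock : μ.sizeUpTo (i + 1) = μ.sizeUpTo i + μ.blocksFun ⟨i, hiμ⟩ :=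
    μ.sizeUpTo_succ hiμ
  have hpos := μ.one_le_blocksFun ⟨i, hiμ⟩
  have hval := hw ⟨p, hp⟩
  have : t.count i = μ.blocksFun ⟨i, hiμ⟩ := hcount ⟨i, hiμ⟩
  simp only [seqPermVal, ← hi] at hval
  have hlow : μ.sizeUpTo i ≤ w ⟨p, hp⟩ := by omega
  have hhigh : (w ⟨p, hp⟩ : ℕ) < μ.sizeUpTo (i + 1) := by omega
  exact (congrArg Fin.val (μ.index_eq_of_sizeUpTo_le_of_lt (i := ⟨i, hiμ⟩) hlow hhigh)).symm

theorem getD_eq_index_inv_of_isSeqPerm {w0 x : Equiv.Perm (Fin m)} (hw0 : inYoung μ w0)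
    (ht : ofTypeL μ t) (hw : isSeqPerm μ t (w0 * x⁻¹)) {p : ℕ} (hp : p < m) :
    t.getD p 0 = μ.index (x⁻¹ ⟨p, hp⟩) := by
  rw [getD_eq_index_of_isSeqPerm ht hw hp, Equiv.Perm.mul_apply, hw0]

end Sequences

/-- if `e = ds` with `ℓ(e) = ℓ(d) + 1`, `s = (k, k+1)`, and `d, e` are both
distinguished coset representatives in `X_{J(μ)}`, and `w(t) = e⁻¹w_{J(μ)}`,
`w(t') = d⁻¹w_{J(μ)}`, then `t` is obtained from `t'` by swapping the entries in
positions `k` and `k+1`, and the entry of `t'` in position `k` is strictly smaller than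
the one in position `k+1`. -/
theorem stmt9 (m : ℕ) (μ : Composition m) (w0 d e : Equiv.Perm (Fin m)) (k : ℕ)
    (hk : k + 1 < m)
    (hw0 : inYoung μ w0)
    (he : isMinRep μ e)
    (hds : e = Equiv.swap (⟨k, by omega⟩ : Fin m) (⟨k + 1, hk⟩ : Fin m) * d)
    (hlen : invLen e = invLen d + 1)
    (t t' : List ℕ)
    (ht : ofTypeL μ t) (htw : isSeqPerm μ t (w0 * e⁻¹))
    (ht' : ofTypeL μ t') (ht'w : isSeqPerm μ t' (w0 * d⁻¹)) :
    t.getD k 0 = t'.getD (k + 1) 0 ∧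
    t.getD (k + 1) 0 = t'.getD k 0 ∧
    (∀ p : ℕ, p ≠ k → p ≠ k + 1 → t.getD p 0 = t'.getD p 0) ∧
    t'.getD k 0 < t'.getD (k + 1) 0 := by
  have hkm : k < m := by omega
  have he_inv : ∀ j, e⁻¹ j = d⁻¹ (Equiv.swap ⟨k, hkm⟩ ⟨k + 1, hk⟩ j) := by
    simp [hds]
  have hT := fun p (hp : p < m) => getD_eq_index_inv_of_isSeqPerm hw0 ht htw hp
  have hT' := fun p (hp : p < m) => getD_eq_index_inv_of_isSeqPerm hw0 ht' ht'w hp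
  refine ⟨?_, ?_, fun p hpk hpk' => ?_, ?_⟩
  · rw [hT k hkm, hT' (k + 1) hk, he_inv, Equiv.swap_apply_left]
  · rw [hT (k + 1) hk, hT' k hkm, he_inv, Equiv.swap_apply_right]
  · rcases Nat.lt_or_ge p m with hpm | hpm
    · rw [hT p hpm, hT' p hpm, he_inv, Equiv.swap_apply_of_ne_of_ne] <;> simpa [Fin.ext_iff]
    · rw [List.getD_eq_default _ _ (ht.1 ▸ hpm), List.getD_eq_default _ _ (ht'.1 ▸ hpm)]
  · rw [hT' k hkm, hT' (k + 1) hk, Fin.val_fin_lt]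
    exact index_inv_lt_of_swap_mul μ rfl he hds hlen
end

section
/- Let μ be a partition of m and t a sequence of type μ. Then every term of t is good (equivalently μ^♯(t) = μ) if and only if, when reading t from left to right, every initial segment contains at least as many i's as (i+1)'s for every i ≥ 1 (i.e. t is a lattice word / reverse reading word condition). -/
/-! Good counts grow by at most one per occurrence of a letter and stay antitone in the
letter, so `goodCounts t ≤ count t` letterwise, with equality on `t` only if it already
holds on every prefix of `t`; when it does, the prefix counts are antitone, which is the
lattice condition. Conversely, along a lattice word all terms of the prefix read so far
are good by induction, so the lattice inequality at the next letter `a > 0` is exactly the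
strict inequality `count a < count (a - 1)` that makes it good. -/

lemma goodStep_le (g : ℕ → ℕ) (a i : ℕ) : goodStep g a i ≤ g i + [a].count i := by
  rw [goodStep]
  by_cases hia : i = a
  · subst hia
    split_ifs <;> simp
  · split_ifs <;> simp [hia]

lemma goodStep_succ_le (g : ℕ → ℕ) (hg : ∀ i, g (i + 1) ≤ g i) (a i : ℕ) :
    goodStep g a (i + 1) ≤ goodStep g a i := by
  have hgi := hg i
  rw [goodStep]
  split_ifs with hgood
  · by_cases hsucc : i + 1 = a
    · subst hsucc
      simp only [Nat.add_sub_cancel, Nat.add_one_ne_zero, false_or] at hgood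
      simpa [Function.update_apply] using hgood
    · by_cases hi : i = a
      · subst hi
        simpa [Function.update_apply] using hgi.trans (Nat.le_succ _)
      · simpa [Function.update_of_ne hsucc, Function.update_of_ne hi]
  · exact hgi

lemma foldl_goodStep_le (v : List ℕ) (g : ℕ → ℕ) (i : ℕ) :
    v.foldl goodStep g i ≤ g i + v.count i := by
  induction v generalizing g with
  | nil => simp
  | cons a v ih =>
    have hstep := goodStep_le g a i
    have hrest := ih (goodStep g a)
    rw [List.foldl_cons, ← List.singleton_append, List.count_append]
    omega

lemma foldl_goodStep_succ_le (v : List ℕ) (g : ℕ → ℕ) (hg : ∀ i, g (i + 1) ≤ g i) (i : ℕ) :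
    v.foldl goodStep g (i + 1) ≤ v.foldl goodStep g i := by
  induction v generalizing g with
  | nil => exact hg i
  | cons a v ih => exact ih _ (goodStep_succ_le g hg a)

lemma goodCounts_append (u v : List ℕ) :
    goodCounts (u ++ v) = v.foldl goodStep (goodCounts u) := by
  simp [goodCounts, List.foldl_append]

lemma goodCounts_succ_le (t : List ℕ) (i : ℕ) : goodCounts t (i + 1) ≤ goodCounts t i :=
  foldl_goodStep_succ_le t _ (fun _ => le_rfl) i

lemma goodCounts_le_count (t : List ℕ) (i : ℕ) : goodCounts t i ≤ t.count i :=
  (foldl_goodStep_le t (fun _ => 0) i).trans_eq (zero_add _)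

lemma goodCounts_eq_count_of_append {u v : List ℕ}
    (h : ∀ i, goodCounts (u ++ v) i = (u ++ v).count i) (i : ℕ) :
    goodCounts u i = u.count i := by
  have hv := foldl_goodStep_le v (goodCounts u) i
  have hu := goodCounts_le_count u i
  have huv := h i
  rw [goodCounts_append, List.count_append] at huv
  omega

lemma goodStep_count_eq_count_append {u : List ℕ} {a : ℕ}
    (h : a = 0 ∨ u.count a < u.count (a - 1)) :
    goodStep (u.count ·) a = ((u ++ [a]).count ·) := by
  funext i
  rw [goodStep, if_pos h, Function.update_apply, List.count_append, List.count_singleton]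
  by_cases hia : i = a
  · simp [hia]
  · simp [hia, Ne.symm hia]

lemma take_eq_take_append {α : Type*} (u v : List α) (k : ℕ) :
    u.take k = (u ++ v).take (min k u.length) := by
  rw [← List.take_take, List.take_left']
  rfl

lemma lattice_of_goodCounts_eq_count {t : List ℕ} (hgood : ∀ i, goodCounts t i = t.count i)
    (k i : ℕ) : (t.take k).count (i + 1) ≤ (t.take k).count i := by
  have hprefix := goodCounts_eq_count_of_append (u := t.take k) (v := t.drop k)
    (by rwa [List.take_append_drop])
  rw [← hprefix, ← hprefix]
  exact goodCounts_succ_le _ i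

lemma goodCounts_eq_count_of_lattice {t : List ℕ}
    (hlattice : ∀ k i, (t.take k).count (i + 1) ≤ (t.take k).count i) (i : ℕ) :
    goodCounts t i = t.count i := by
  induction t using List.reverseRecOn generalizing i with
  | nil => rfl
  | append_singleton u a ih =>
    have hu : goodCounts u = (u.count ·) :=
      funext <| ih fun k i => by rw [take_eq_take_append u [a]]; exact hlattice _ i
    have hgood : a = 0 ∨ u.count a < u.count (a - 1) := by
      rcases Nat.eq_zero_or_pos a with ha | ha
      · exact Or.inl ha
      · have hlast := hlattice (u.length + 1) (a - 1)
        have hne : a ≠ a - 1 := by omega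
        rw [List.take_of_length_le (by simp), Nat.sub_add_cancel ha] at hlast
        simp [hne] at hlast
        omega
    rw [goodCounts_append, List.foldl_cons, List.foldl_nil, hu,
      goodStep_count_eq_count_append hgood]

lemma ofTypeL.count_eq {m : ℕ} {μ : Composition m} {t : List ℕ} (ht : ofTypeL μ t) (i : ℕ) :
    t.count i = μ.blocks.getD i 0 := by
  obtain ⟨-, hmem, hcount⟩ := ht
  rcases lt_or_ge i μ.length with h | h
  · rw [hcount ⟨i, h⟩, List.getD_eq_getElem _ _ h]
    rfl
  · rw [List.count_eq_zero.mpr fun hi => (hmem i hi).not_ge h, List.getD_eq_default _ _ h]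

theorem stmt17_general (m : ℕ) (μ : Composition m)
    (t : List ℕ) (ht : ofTypeL μ t) :
    (∀ i : ℕ, goodCounts t i = μ.blocks.getD i 0) ↔
      (∀ k i : ℕ, (t.take k).count (i + 1) ≤ (t.take k).count i) := by
  simp only [← ht.count_eq]
  exact ⟨lattice_of_goodCounts_eq_count, goodCounts_eq_count_of_lattice⟩

/-- for a partition `μ` of `m` and a sequence `t` of type `μ`, every term
of `t` is good (i.e. `μ♯(t) = μ`) iff every initial segment of `t` contains, for each
`i`, at least as many `i`'s as `(i+1)`'s (`t` is a lattice word). -/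
theorem stmt17 (m : ℕ) (μ : Composition m)
    (hμ : List.Pairwise (· ≥ ·) μ.blocks)
    (t : List ℕ) (ht : ofTypeL μ t) :
    (∀ i : ℕ, goodCounts t i = μ.blocks.getD i 0) ↔
      (∀ k i : ℕ, (t.take k).count (i + 1) ≤ (t.take k).count i) :=
  stmt17_general m μ t ht
end
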